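/- Let a²,b²,c² > 0, k ∈ ℤ∖{0}, 0 < R < ∞, and let w₀, w₁, w₂ : [0,R] → ℝ be continuous on [0,R] and C¹ on (0,R), with ∫₀^R [w₀'(r)² + w₁'(r)² + w₂'(r)²] r dr < ∞ and ∫₀^R (w₁(r)² + w₂(r)²)/r dr < ∞. Define Q : B_R → S₀ by Q(x) = w₀(r)E₀ + w₁(r)E₁(φ) + w₂(r)E₂(φ). Then the Landau–de Gennes energy satisfies ∫_{B_R} [ (1/2)|∇Q|² + f_bulk(Q) ] dx = 2π ∫₀^R { (1/2)[ w₀'² + w₁'² + w₂'² + (k²/r²)(w₁² + w₂²) ] − (a²/2)(w₀² + w₁² + w₂²) + (c²/4)(w₀² + w₁² + w₂²)² − (b²/(3√6)) w₀ (w₀² − 3(w₁² + w₂²)) } r dr. -/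

import Mathlib

open Real Matrix
open scoped ENNReal

noncomputable section

abbrev Mat3 := Matrix (Fin 3) (Fin 3) ℝ

/-- `Q` is a symmetric traceless 3×3 real matrix, i.e. an element of `S₀`. -/
def isS0 (Q : Mat3) : Prop := Qᵀ = Q ∧ Q.trace = 0

def e1 : Fin 3 → ℝ := ![1, 0, 0]
def e2 : Fin 3 → ℝ := ![0, 1, 0]
def e3 : Fin 3 → ℝ := ![0, 0, 1]

/-- `n(φ) = (cos(kφ/2), sin(kφ/2), 0)`. -/
def nvec (k : ℤ) (φ : ℝ) : Fin 3 → ℝ := ![Real.cos ((k : ℝ) * φ / 2), Real.sin ((k : ℝ) * φ / 2), 0]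

/-- `m(φ) = (−sin(kφ/2), cos(kφ/2), 0)`. -/
def mvec (k : ℤ) (φ : ℝ) : Fin 3 → ℝ := ![-Real.sin ((k : ℝ) * φ / 2), Real.cos ((k : ℝ) * φ / 2), 0]

/-- `I₂ = I₃ − e₃ ⊗ e₃`. -/
def I2 : Mat3 := 1 - vecMulVec e3 e3

def E0 : Mat3 := Real.sqrt (3/2) • (vecMulVec e3 e3 - (1/3 : ℝ) • (1 : Mat3))
def E1 (k : ℤ) (φ : ℝ) : Mat3 :=
  Real.sqrt 2 • (vecMulVec (nvec k φ) (nvec k φ) - (1/2 : ℝ) • I2)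
def E2mat (k : ℤ) (φ : ℝ) : Mat3 :=
  (Real.sqrt 2)⁻¹ • (vecMulVec (nvec k φ) (mvec k φ) + vecMulVec (mvec k φ) (nvec k φ))
def E3mat : Mat3 := (Real.sqrt 2)⁻¹ • (vecMulVec e1 e3 + vecMulVec e3 e1)
def E4mat : Mat3 := (Real.sqrt 2)⁻¹ • (vecMulVec e2 e3 + vecMulVec e3 e2)

/-- The rotation `R_k(ψ)` of winding `k/2` about the vertical axis. -/
def Rk (k : ℤ) (ψ : ℝ) : Mat3 :=
  !![Real.cos ((k : ℝ) * ψ / 2), -Real.sin ((k : ℝ) * ψ / 2), 0;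
     Real.sin ((k : ℝ) * ψ / 2),  Real.cos ((k : ℝ) * ψ / 2), 0;
     0, 0, 1]

/-- The Landau-de Gennes bulk potential. -/
def fbulk (a2 b2 c2 : ℝ) (Q : Mat3) : ℝ :=
  -(a2/2) * (Q*Q).trace - (b2/3) * (Q*Q*Q).trace + (c2/4) * ((Q*Q).trace)^2

/-- The constant `s₊ = (b² + √(b⁴ + 24a²c²))/(4c²)`. -/
def splus (a2 b2 c2 : ℝ) : ℝ := (b2 + Real.sqrt (b2^2 + 24*a2*c2)) / (4*c2)

/-- Laplacian of a scalar function on `ℝ²`, as the sum of the two repeated partial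
derivatives along the coordinate axes. -/
def lap (f : ℝ × ℝ → ℝ) (p : ℝ × ℝ) : ℝ :=
  deriv (fun t => deriv (fun s => f (s, p.2)) t) p.1 +
  deriv (fun t => deriv (fun s => f (p.1, s)) t) p.2

/-- Componentwise Laplacian of a matrix-valued map on `ℝ²`. -/
def matLap (Q : ℝ × ℝ → Mat3) (p : ℝ × ℝ) : Mat3 :=
  Matrix.of fun i j => lap (fun x => Q x i j) p

/-- Squared norm of the gradient of a scalar function on `ℝ²`. -/
def gradNormSq (f : ℝ × ℝ → ℝ) (p : ℝ × ℝ) : ℝ :=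
  (fderiv ℝ f p (1, 0))^2 + (fderiv ℝ f p (0, 1))^2

/-- `|∇Q|²`: sum over all matrix entries of the squared norms of their gradients. -/
def matGradNormSq (Q : ℝ × ℝ → Mat3) (p : ℝ × ℝ) : ℝ :=
  ∑ i, ∑ j, gradNormSq (fun x => Q x i j) p

/-- Membership in the open disk of radius `R ∈ (0,∞]` centered at the origin. -/
def inBall (R : ℝ≥0∞) (x : ℝ × ℝ) : Prop :=
  ENNReal.ofReal (Real.sqrt (x.1^2 + x.2^2)) < R

/-- The right-hand side of the Euler–Lagrange equation
`ΔQ = −a²Q − b²(Q² − (1/3)|Q|²I₃) + c²|Q|²Q`. -/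
def ELrhs (a2 b2 c2 : ℝ) (A : Mat3) : Mat3 :=
  -a2 • A - b2 • (A * A - ((1/3 : ℝ) * (A * A).trace) • (1 : Mat3)) + (c2 * (A * A).trace) • A

/-- Frobenius squared norm of a 3×3 matrix. -/
def frobSq (A : Mat3) : ℝ := ∑ i, ∑ j, (A i j)^2

/-- For `x = (x₁,x₂) ∈ ℝ²`, `x̃ = (x₁,x₂,0) ∈ ℝ³`. -/
def tilde (x : ℝ × ℝ) : Fin 3 → ℝ := ![x.1, x.2, 0]

/-- The projection `P₂(x₁,x₂,x₃) = (x₁,x₂)`. -/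
def P2 (v : Fin 3 → ℝ) : ℝ × ℝ := (v 0, v 1)

/-- The antisymmetric matrix `S₀ = e₂⊗e₁ − e₁⊗e₂`. -/
def S0mat : Mat3 := vecMulVec e2 e1 - vecMulVec e1 e2

end

/-!
In polar coordinates `(r, φ)` the ansatz reads `Q = w₀ E₀ + U E₁(0) + V E₂(0)`, where `(U, V)` is
`(w₁, w₂)` rotated by the angle `kφ`. The matrices `E₀, E₁(0), E₂(0)` are orthonormal, so
`|∂_r Q|² = w₀'² + w₁'² + w₂'²` and `|∂_φ Q|² = k² (w₁² + w₂²)`, and the chain rule through the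
polar-coordinate map turns these into `|∇Q|² = |∂_r Q|² + r⁻² |∂_φ Q|²`. The bulk energy depends
only on `tr Q²` and `tr Q³`, which are computed in the same frame. The energy density is thus
radial on the disk, and the polar change of variables produces the factor `2π`.
-/

open Filter Topology MeasureTheory

lemma ContinuousLinearMap.apply_eq_fst_mul_add_snd_mul (D : ℝ × ℝ →L[ℝ] ℝ) (v : ℝ × ℝ) :
    D v = v.1 * D (1, 0) + v.2 * D (0, 1) := by
  conv_lhs => rw [show v = v.1 • ((1 : ℝ), (0 : ℝ)) + v.2 • ((0 : ℝ), (1 : ℝ)) by ext <;> simp]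
  rw [map_add, map_smul, map_smul, smul_eq_mul, smul_eq_mul]

lemma hasFDerivAt_comp_fst_mul_comp_snd {w h : ℝ → ℝ} {d e r θ : ℝ} (hw : HasDerivAt w d r)
    (hh : HasDerivAt h e θ) :
    HasFDerivAt (fun p : ℝ × ℝ => w p.1 * h p.2)
      ((d * h θ) • ContinuousLinearMap.fst ℝ ℝ ℝ + (w r * e) • ContinuousLinearMap.snd ℝ ℝ ℝ)
      (r, θ) := by
  refine ((hw.comp_hasFDerivAt (r, θ) (hasFDerivAt_fst (𝕜 := ℝ))).mul
    (hh.comp_hasFDerivAt (r, θ) (hasFDerivAt_snd (𝕜 := ℝ) (p := (r, θ))))).congr_fderiv ?_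
  ext <;> simp [mul_comm]

lemma fderivPolarCoordSymm_apply (p v : ℝ × ℝ) :
    fderivPolarCoordSymm p v =
      (cos p.2 * v.1 - p.1 * sin p.2 * v.2, sin p.2 * v.1 + p.1 * cos p.2 * v.2) := by
  rw [fderivPolarCoordSymm, Matrix.toLin_finTwoProd_toContinuousLinearMap]
  simp
  ring_nf

lemma hasStrictFDerivAt_polarCoord_symm (p : ℝ × ℝ) :
    HasStrictFDerivAt polarCoord.symm (fderivPolarCoordSymm p) p := by
  have hsmooth : ContDiff ℝ 1 polarCoord.symm := by
    rw [show (polarCoord.symm : ℝ × ℝ → ℝ × ℝ) = fun q => (q.1 * cos q.2, q.1 * sin q.2) from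
      funext polarCoord_symm_apply]
    fun_prop
  rw [← (hasFDerivAt_polarCoord_symm p).fderiv]
  exact hsmooth.contDiffAt.hasStrictFDerivAt one_ne_zero

theorem differentiableAt_of_comp_polarCoord_symm {F : Type*} [NormedAddCommGroup F]
    [NormedSpace ℝ F] {f g : ℝ × ℝ → F} {p : ℝ × ℝ} (hp : p.1 ≠ 0)
    (hg : DifferentiableAt ℝ g p) (hfg : f ∘ polarCoord.symm =ᶠ[𝓝 p] g) :
    DifferentiableAt ℝ f (polarCoord.symm p) := by
  have hdet : (fderivPolarCoordSymm p).det ≠ 0 := by rwa [det_fderivPolarCoordSymm]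
  have hP : HasStrictFDerivAt polarCoord.symm
      ((fderivPolarCoordSymm p).toContinuousLinearEquivOfDetNeZero hdet : ℝ × ℝ →L[ℝ] ℝ × ℝ) p := by
    rw [ContinuousLinearMap.coe_toContinuousLinearEquivOfDetNeZero]
    exact hasStrictFDerivAt_polarCoord_symm p
  set ψ := hP.localInverse
  have hfψ : f =ᶠ[𝓝 (polarCoord.symm p)] g ∘ ψ := by
    filter_upwards [hP.eventually_right_inverse, hP.localInverse_tendsto.eventually hfg]
      with y hright hy
    rw [Function.comp_apply, ← hy, Function.comp_apply, hright]
  refine DifferentiableAt.congr_of_eventuallyEq ?_ hfψ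
  refine DifferentiableAt.comp (polarCoord.symm p) ?_ hP.to_localInverse.differentiableAt
  rwa [show ψ (polarCoord.symm p) = p from hP.localInverse_apply_image]

theorem gradNormSq_of_comp_polarCoord_symm {f g : ℝ × ℝ → ℝ} {L : ℝ × ℝ →L[ℝ] ℝ}
    {p : ℝ × ℝ} (hp : p.1 ≠ 0) (hg : HasFDerivAt g L p)
    (hfg : f ∘ polarCoord.symm =ᶠ[𝓝 p] g) :
    gradNormSq f (polarCoord.symm p) = L (1, 0) ^ 2 + L (0, 1) ^ 2 / p.1 ^ 2 := by
  have hf := (differentiableAt_of_comp_polarCoord_symm hp hg.differentiableAt hfg).hasFDerivAt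
  set D := fderiv ℝ f (polarCoord.symm p)
  have hL : L = D.comp (fderivPolarCoordSymm p) :=
    hg.unique ((hf.comp p (hasFDerivAt_polarCoord_symm p)).congr_of_eventuallyEq hfg.symm)
  have h10 : L (1, 0) = cos p.2 * D (1, 0) + sin p.2 * D (0, 1) := by
    rw [hL, ContinuousLinearMap.comp_apply, fderivPolarCoordSymm_apply,
      D.apply_eq_fst_mul_add_snd_mul]
    ring
  have h01 : L (0, 1) = p.1 * (-sin p.2 * D (1, 0) + cos p.2 * D (0, 1)) := by
    rw [hL, ContinuousLinearMap.comp_apply, fderivPolarCoordSymm_apply,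
      D.apply_eq_fst_mul_add_snd_mul]
    ring
  rw [gradNormSq, h10, h01]
  field_simp
  linear_combination -(D (1, 0) ^ 2 + D (0, 1) ^ 2) * sin_sq_add_cos_sq p.2

open Set in
theorem setIntegral_disk_eq_of_radial {E : ℝ × ℝ → ℝ} {g : ℝ → ℝ} {R : ℝ}
    (hEg : ∀ r θ, 0 < r → r < R → E (polarCoord.symm (r, θ)) = g r) :
    ∫ x in {x : ℝ × ℝ | √(x.1 ^ 2 + x.2 ^ 2) < R}, E x =
      2 * π * ∫ r in Ioo 0 R, g r * r := by
  set D := {x : ℝ × ℝ | √(x.1 ^ 2 + x.2 ^ 2) < R}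
  have hD : MeasurableSet D := (isOpen_lt (by fun_prop) continuous_const).measurableSet
  have hnorm (p : ℝ × ℝ) (hp : 0 < p.1) :
      √((polarCoord.symm p).1 ^ 2 + (polarCoord.symm p).2 ^ 2) = p.1 := by
    simp only [polarCoord_symm_apply]
    conv_rhs => rw [← sqrt_sq hp.le]
    congr 1
    linear_combination p.1 ^ 2 * sin_sq_add_cos_sq p.2
  have hEq : EqOn (fun p : ℝ × ℝ => p.1 • D.indicator E (polarCoord.symm p))
      (fun p => (Ioo 0 R).indicator (fun r => g r * r) p.1 * (1 : ℝ)) polarCoord.target := by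
    rintro ⟨r, θ⟩ ⟨hr, -⟩
    simp only [mem_Ioi] at hr
    change r • D.indicator E (polarCoord.symm (r, θ)) = (Ioo 0 R).indicator (fun r => g r * r) r * 1
    by_cases hrR : r < R
    · have hmem : polarCoord.symm (r, θ) ∈ D := by
        simp only [D, mem_ofPred_eq, hnorm (r, θ) hr, hrR]
      rw [smul_eq_mul, indicator_of_mem hmem, hEg r θ hr hrR]
      simp [hr, hrR, mul_comm]
    · have hmem : polarCoord.symm (r, θ) ∉ D := by
        simp only [D, mem_ofPred_eq, hnorm (r, θ) hr, hrR, not_false_eq_true]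
      rw [indicator_of_notMem hmem]
      simp [hrR]
  rw [← integral_indicator hD, ← integral_comp_polarCoord_symm,
    setIntegral_congr_fun polarCoord.open_target.measurableSet hEq, polarCoord_target,
    Measure.volume_eq_prod, ← Measure.prod_restrict,
    integral_prod_mul (fun r => (Ioo 0 R).indicator (fun r => g r * r) r) (fun _ => 1),
    setIntegral_indicator measurableSet_Ioo, inter_eq_self_of_subset_right Ioo_subset_Ioi_self,
    integral_const, measureReal_restrict_apply_univ,
    volume_real_Ioo_of_le (by linarith [pi_pos]), smul_eq_mul]
  ring

namespace RadialAnsatz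

/-- `x E₀ + y E₁(0) + z E₂(0)`, written out in coordinates. -/
noncomputable def frameMat (x y z : ℝ) : Mat3 :=
  !![-x / √6 + y / √2, z / √2, 0;
     z / √2, -x / √6 - y / √2, 0;
     0, 0, 2 * x / √6]

theorem smul_E0_add_smul_E1_add_smul_E2mat (k : ℤ) (φ u₀ u₁ u₂ : ℝ) :
    u₀ • E0 + u₁ • E1 k φ + u₂ • E2mat k φ =
      frameMat u₀ (u₁ * cos (k * φ) - u₂ * sin (k * φ)) (u₁ * sin (k * φ) + u₂ * cos (k * φ)) := by
  have hcos : cos (k * φ) = cos (k * φ / 2) ^ 2 - sin (k * φ / 2) ^ 2 := by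
    rw [← cos_two_mul']; ring_nf
  have hsin : sin (k * φ) = 2 * sin (k * φ / 2) * cos (k * φ / 2) := by
    rw [← sin_two_mul]; ring_nf
  have hone := sin_sq_add_cos_sq ((k : ℝ) * φ / 2)
  have h2 : √2 * √2 = 2 := mul_self_sqrt (by norm_num)
  have h3 : √3 * √3 = 3 := mul_self_sqrt (by norm_num)
  have h6 : √6 = √2 * √3 := by
    rw [show (6 : ℝ) = 2 * 3 by norm_num, sqrt_mul (by norm_num)]
  have : √2 ≠ 0 := by positivity
  have : √3 ≠ 0 := by positivity
  rw [hcos, hsin]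
  ext i j
  fin_cases i <;> fin_cases j <;>
    simp [frameMat, E0, E1, E2mat, I2, nvec, mvec, e3, sqrt_div, h6] <;>
    field_simp <;> grind

theorem frameMat_apply (x y z : ℝ) (i j : Fin 3) :
    frameMat x y z i j =
      x * frameMat 1 0 0 i j + y * frameMat 0 1 0 i j + z * frameMat 0 0 1 i j := by
  fin_cases i <;> fin_cases j <;> simp [frameMat] <;> ring

theorem frobSq_frameMat (x y z : ℝ) : frobSq (frameMat x y z) = x ^ 2 + y ^ 2 + z ^ 2 := by
  have h2 : √2 ^ 2 = 2 := sq_sqrt (by norm_num)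
  have h6 : √6 ^ 2 = 6 := sq_sqrt (by norm_num)
  have : √2 ≠ 0 := by positivity
  have : √6 ≠ 0 := by positivity
  simp [frobSq, Fin.sum_univ_three, frameMat]
  field_simp
  grind

theorem trace_frameMat_sq (x y z : ℝ) :
    (frameMat x y z * frameMat x y z).trace = x ^ 2 + y ^ 2 + z ^ 2 := by
  rw [← frobSq_frameMat]
  simp [frobSq, Matrix.trace, Fin.sum_univ_three, frameMat]
  ring

theorem trace_frameMat_cube (x y z : ℝ) :
    (frameMat x y z * frameMat x y z * frameMat x y z).trace =
      x * (x ^ 2 - 3 * (y ^ 2 + z ^ 2)) / √6 := by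
  have h2 : √2 ^ 2 = 2 := sq_sqrt (by norm_num)
  have h6 : √6 ^ 2 = 6 := sq_sqrt (by norm_num)
  have : √2 ≠ 0 := by positivity
  have : √6 ≠ 0 := by positivity
  simp [Matrix.trace, Fin.sum_univ_three, frameMat]
  field_simp
  grind

theorem fbulk_smul_E0_add_smul_E1_add_smul_E2mat (a2 b2 c2 : ℝ) (k : ℤ) (φ u₀ u₁ u₂ : ℝ) :
    fbulk a2 b2 c2 (u₀ • E0 + u₁ • E1 k φ + u₂ • E2mat k φ) =
      -a2 / 2 * (u₀ ^ 2 + u₁ ^ 2 + u₂ ^ 2) + c2 / 4 * (u₀ ^ 2 + u₁ ^ 2 + u₂ ^ 2) ^ 2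
        - b2 / (3 * √6) * (u₀ * (u₀ ^ 2 - 3 * (u₁ ^ 2 + u₂ ^ 2))) := by
  rw [smul_E0_add_smul_E1_add_smul_E2mat, fbulk, trace_frameMat_sq, trace_frameMat_cube]
  set U := u₁ * cos (k * φ) - u₂ * sin (k * φ)
  set V := u₁ * sin (k * φ) + u₂ * cos (k * φ)
  have hrot : U ^ 2 + V ^ 2 = u₁ ^ 2 + u₂ ^ 2 := by
    linear_combination (u₁ ^ 2 + u₂ ^ 2) * sin_sq_add_cos_sq ((k : ℝ) * φ)
  linear_combination
    (-a2 / 2 + c2 / 4 * (2 * u₀ ^ 2 + U ^ 2 + V ^ 2 + u₁ ^ 2 + u₂ ^ 2) + b2 * u₀ / √6) * hrot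

noncomputable def ansatz (k : ℤ) (w₀ w₁ w₂ : ℝ → ℝ) (p : ℝ × ℝ) : Mat3 :=
  w₀ p.1 • E0 + w₁ p.1 • E1 k p.2 + w₂ p.1 • E2mat k p.2

theorem hasFDerivAt_ansatz_apply {k : ℤ} {w₀ w₁ w₂ : ℝ → ℝ} {d₀ d₁ d₂ r θ : ℝ}
    (h₀ : HasDerivAt w₀ d₀ r) (h₁ : HasDerivAt w₁ d₁ r) (h₂ : HasDerivAt w₂ d₂ r) (i j : Fin 3) :
    HasFDerivAt (fun p => ansatz k w₀ w₁ w₂ p i j)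
      (frameMat d₀ (d₁ * cos (k * θ) - d₂ * sin (k * θ)) (d₁ * sin (k * θ) + d₂ * cos (k * θ)) i j
          • ContinuousLinearMap.fst ℝ ℝ ℝ
        + frameMat 0 (-k * (w₁ r * sin (k * θ) + w₂ r * cos (k * θ)))
            (k * (w₁ r * cos (k * θ) - w₂ r * sin (k * θ))) i j • ContinuousLinearMap.snd ℝ ℝ ℝ)
      (r, θ) := by
  have hc : HasDerivAt (fun φ => cos (k * φ)) (-sin (k * θ) * k) θ := by
    simpa using ((hasDerivAt_id θ).const_mul (k : ℝ)).cos
  have hs : HasDerivAt (fun φ => sin (k * φ)) (cos (k * θ) * k) θ := by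
    simpa using ((hasDerivAt_id θ).const_mul (k : ℝ)).sin
  have hA := hasFDerivAt_comp_fst_mul_comp_snd h₀ (hasDerivAt_const θ 1)
  have hU := (hasFDerivAt_comp_fst_mul_comp_snd h₁ hc).sub
    (hasFDerivAt_comp_fst_mul_comp_snd h₂ hs)
  have hV := (hasFDerivAt_comp_fst_mul_comp_snd h₁ hs).add
    (hasFDerivAt_comp_fst_mul_comp_snd h₂ hc)
  have hsum := ((hA.mul_const (frameMat 1 0 0 i j)).add (hU.mul_const (frameMat 0 1 0 i j))).add
    (hV.mul_const (frameMat 0 0 1 i j))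
  have hfun : (fun p => ansatz k w₀ w₁ w₂ p i j) = fun p : ℝ × ℝ =>
      w₀ p.1 * 1 * frameMat 1 0 0 i j
        + (w₁ p.1 * cos (k * p.2) - w₂ p.1 * sin (k * p.2)) * frameMat 0 1 0 i j
        + (w₁ p.1 * sin (k * p.2) + w₂ p.1 * cos (k * p.2)) * frameMat 0 0 1 i j := by
    ext p
    rw [ansatz, smul_E0_add_smul_E1_add_smul_E2mat, frameMat_apply, mul_one]
  rw [hfun]
  refine hsum.congr_fderiv ?_
  rw [frameMat_apply d₀, frameMat_apply 0 (-k * _)]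
  ext <;> simp <;> ring

theorem matGradNormSq_polarCoord_symm_of_eventuallyEq_ansatz {Q : ℝ × ℝ → Mat3} {k : ℤ}
    {w₀ w₁ w₂ : ℝ → ℝ} {d₀ d₁ d₂ r θ : ℝ} (hr : r ≠ 0) (h₀ : HasDerivAt w₀ d₀ r)
    (h₁ : HasDerivAt w₁ d₁ r) (h₂ : HasDerivAt w₂ d₂ r)
    (hQ : Q ∘ polarCoord.symm =ᶠ[𝓝 (r, θ)] ansatz k w₀ w₁ w₂) :
    matGradNormSq Q (polarCoord.symm (r, θ)) =
      d₀ ^ 2 + d₁ ^ 2 + d₂ ^ 2 + k ^ 2 / r ^ 2 * (w₁ r ^ 2 + w₂ r ^ 2) := by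
  have hentry (i j : Fin 3) :=
    gradNormSq_of_comp_polarCoord_symm (f := fun x => Q x i j) hr
      (hasFDerivAt_ansatz_apply h₀ h₁ h₂ i j) (hQ.mono fun p hp => congrFun (congrFun hp i) j)
  simp only [matGradNormSq, hentry, _root_.add_apply,
    _root_.smul_apply, ContinuousLinearMap.coe_fst', ContinuousLinearMap.coe_snd',
    smul_eq_mul, mul_one, mul_zero, add_zero, zero_add, Finset.sum_add_distrib, ← Finset.sum_div]
  change frobSq _ + frobSq _ / r ^ 2 = _
  rw [frobSq_frameMat, frobSq_frameMat]
  field_simp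
  linear_combination (r ^ 2 * (d₁ ^ 2 + d₂ ^ 2) + k ^ 2 * (w₁ r ^ 2 + w₂ r ^ 2))
    * sin_sq_add_cos_sq ((k : ℝ) * θ)

end RadialAnsatz

open RadialAnsatz

theorem stmt11_general (a2 b2 c2 : ℝ)
    (k : ℤ) (R : ℝ)
    (w₀ w₁ w₂ : ℝ → ℝ)
    (hd₀ : ContDiffOn ℝ 1 w₀ (Set.Ioo 0 R)) (hd₁ : ContDiffOn ℝ 1 w₁ (Set.Ioo 0 R))
    (hd₂ : ContDiffOn ℝ 1 w₂ (Set.Ioo 0 R))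
    (Q : ℝ × ℝ → Mat3)
    (hQ : ∀ r φ : ℝ, 0 < r → r < R →
      Q (r * Real.cos φ, r * Real.sin φ) = w₀ r • E0 + w₁ r • E1 k φ + w₂ r • E2mat k φ) :
    ∫ x in {x : ℝ × ℝ | Real.sqrt (x.1^2 + x.2^2) < R},
        ((1/2) * matGradNormSq Q x + fbulk a2 b2 c2 (Q x)) =
      2 * Real.pi * ∫ r in Set.Ioo (0 : ℝ) R,
        ((1/2) * ((deriv w₀ r)^2 + (deriv w₁ r)^2 + (deriv w₂ r)^2
              + (k : ℝ)^2 / r^2 * ((w₁ r)^2 + (w₂ r)^2))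
          - a2/2 * ((w₀ r)^2 + (w₁ r)^2 + (w₂ r)^2)
          + c2/4 * ((w₀ r)^2 + (w₁ r)^2 + (w₂ r)^2)^2
          - b2 / (3 * Real.sqrt 6) * (w₀ r * ((w₀ r)^2 - 3 * ((w₁ r)^2 + (w₂ r)^2)))) * r := by
  refine setIntegral_disk_eq_of_radial fun r θ hr hrR => ?_
  have hQ_polar : Q ∘ polarCoord.symm =ᶠ[𝓝 (r, θ)] ansatz k w₀ w₁ w₂ := by
    filter_upwards [(isOpen_Ioo.preimage continuous_fst).mem_nhds (show (r, θ).1 ∈ Set.Ioo 0 R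
      from ⟨hr, hrR⟩)] with p hp
    exact hQ p.1 p.2 hp.1 hp.2
  have hderiv {w : ℝ → ℝ} (hw : ContDiffOn ℝ 1 w (Set.Ioo 0 R)) : HasDerivAt w (deriv w r) r :=
    ((hw.differentiableOn one_ne_zero).differentiableAt (Ioo_mem_nhds hr hrR)).hasDerivAt
  rw [matGradNormSq_polarCoord_symm_of_eventuallyEq_ansatz hr.ne' (hderiv hd₀) (hderiv hd₁)
    (hderiv hd₂) hQ_polar, show Q (polarCoord.symm (r, θ)) = ansatz k w₀ w₁ w₂ (r, θ) from
      hQ_polar.eq_of_nhds, ansatz,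
    fbulk_smul_E0_add_smul_E1_add_smul_E2mat]
  ring

/-- the Landau–de Gennes energy of a `k`-radially symmetric map on `B_R`
reduces to a one-dimensional weighted integral. -/
theorem stmt11 (a2 b2 c2 : ℝ) (ha : 0 < a2) (hb : 0 < b2) (hc : 0 < c2)
    (k : ℤ) (hk : k ≠ 0) (R : ℝ) (hR : 0 < R)
    (w₀ w₁ w₂ : ℝ → ℝ)
    (hc₀ : ContinuousOn w₀ (Set.Icc 0 R)) (hc₁ : ContinuousOn w₁ (Set.Icc 0 R))
    (hc₂ : ContinuousOn w₂ (Set.Icc 0 R))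
    (hd₀ : ContDiffOn ℝ 1 w₀ (Set.Ioo 0 R)) (hd₁ : ContDiffOn ℝ 1 w₁ (Set.Ioo 0 R))
    (hd₂ : ContDiffOn ℝ 1 w₂ (Set.Ioo 0 R))
    (hint1 : MeasureTheory.IntegrableOn
      (fun r => ((deriv w₀ r)^2 + (deriv w₁ r)^2 + (deriv w₂ r)^2) * r) (Set.Ioo 0 R))
    (hint2 : MeasureTheory.IntegrableOn
      (fun r => ((w₁ r)^2 + (w₂ r)^2) / r) (Set.Ioo 0 R))
    (Q : ℝ × ℝ → Mat3)
    (hQ : ∀ r φ : ℝ, 0 < r → r < R →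
      Q (r * Real.cos φ, r * Real.sin φ) = w₀ r • E0 + w₁ r • E1 k φ + w₂ r • E2mat k φ) :
    ∫ x in {x : ℝ × ℝ | Real.sqrt (x.1^2 + x.2^2) < R},
        ((1/2) * matGradNormSq Q x + fbulk a2 b2 c2 (Q x)) =
      2 * Real.pi * ∫ r in Set.Ioo (0 : ℝ) R,
        ((1/2) * ((deriv w₀ r)^2 + (deriv w₁ r)^2 + (deriv w₂ r)^2
              + (k : ℝ)^2 / r^2 * ((w₁ r)^2 + (w₂ r)^2))
          - a2/2 * ((w₀ r)^2 + (w₁ r)^2 + (w₂ r)^2)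
          + c2/4 * ((w₀ r)^2 + (w₁ r)^2 + (w₂ r)^2)^2
          - b2 / (3 * Real.sqrt 6) * (w₀ r * ((w₀ r)^2 - 3 * ((w₁ r)^2 + (w₂ r)^2)))) * r :=
  stmt11_general a2 b2 c2 k R w₀ w₁ w₂ hd₀ hd₁ hd₂ Q hQ
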